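/- The bracket {·,·}⁻ satisfies the Jacobi identity: for all smooth functions f, g, h : ℝⁿ×ℝⁿ → ℝ, {{f,g}⁻, h}⁻ + {{g,h}⁻, f}⁻ + {{h,f}⁻, g}⁻ = 0 at every point of ℝⁿ×ℝⁿ; hence {·,·}⁻ is a Poisson bracket. -/

import Mathlib

open scoped BigOperators

noncomputable section

/-- Phase space `T*ℝⁿ = ℝⁿ × ℝⁿ`, points `x = (q, p)`. -/
abbrev Phase (n : ℕ) := (Fin n → ℝ) × (Fin n → ℝ)

/-- Partial derivative `∂f/∂qᵢ` of a function on phase space. -/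
def dq {n : ℕ} (f : Phase n → ℝ) (i : Fin n) (x : Phase n) : ℝ :=
  fderiv ℝ f x (Pi.single i 1, 0)

/-- Partial derivative `∂f/∂pᵢ` of a function on phase space. -/
def dp {n : ℕ} (f : Phase n → ℝ) (i : Fin n) (x : Phase n) : ℝ :=
  fderiv ℝ f x (0, Pi.single i 1)

/-- Partial derivative `∂V/∂qᵢ` of a potential on configuration space. -/
def dV {n : ℕ} (V : (Fin n → ℝ) → ℝ) (i : Fin n) (q : Fin n → ℝ) : ℝ :=
  fderiv ℝ V q (Pi.single i 1)

/-- The Hamiltonian `H(q,p) = Σᵢ pᵢ²/(2mᵢ) + V(q)`. -/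
def Ham {n : ℕ} (m : Fin n → ℝ) (V : (Fin n → ℝ) → ℝ) (x : Phase n) : ℝ :=
  (∑ i, x.2 i ^ 2 / (2 * m i)) + V x.1

/-- The Hamiltonian vector field `X` acting on functions:
`Xf = Σᵢ (pᵢ/mᵢ) ∂f/∂qᵢ − (∂V/∂qᵢ) ∂f/∂pᵢ`. -/
def Xop {n : ℕ} (m : Fin n → ℝ) (V : (Fin n → ℝ) → ℝ) (f : Phase n → ℝ) (x : Phase n) : ℝ :=
  ∑ i, (x.2 i / m i * dq f i x - dV V i x.1 * dp f i x)

/-- The canonical Poisson bracket `{f,g} = Σᵢ (∂f/∂qᵢ ∂g/∂pᵢ − ∂f/∂pᵢ ∂g/∂qᵢ)`. -/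
def bracketC {n : ℕ} (f g : Phase n → ℝ) (x : Phase n) : ℝ :=
  ∑ i, (dq f i x * dp g i x - dp f i x * dq g i x)

/-- `Āᵢⱼ = aⱼpᵢ/mᵢ − aᵢpⱼ/mⱼ`. -/
def Abar {n : ℕ} (m a : Fin n → ℝ) (i j : Fin n) (x : Phase n) : ℝ :=
  a j * x.2 i / m i - a i * x.2 j / m j

/-- `B̄ᵢⱼ = (k/(2mᵢ)) pᵢpⱼ + aᵢ ∂U/∂qⱼ`. -/
def Bbar {n : ℕ} (m a : Fin n → ℝ) (k : ℝ) (U : (Fin n → ℝ) → ℝ) (i j : Fin n)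
    (x : Phase n) : ℝ :=
  k / (2 * m i) * (x.2 i * x.2 j) + a i * dV U j x.1

/-- `C̄ᵢⱼ = (k/2)(pᵢ ∂U/∂qⱼ − pⱼ ∂U/∂qᵢ)`. -/
def Cbar {n : ℕ} (k : ℝ) (U : (Fin n → ℝ) → ℝ) (i j : Fin n) (x : Phase n) : ℝ :=
  k / 2 * (x.2 i * dV U j x.1 - x.2 j * dV U i x.1)

/-- The bracket `{f,g}⁻` associated with the bivector `P̄′`. -/
def bracketB {n : ℕ} (m a : Fin n → ℝ) (k : ℝ) (U : (Fin n → ℝ) → ℝ)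
    (f g : Phase n → ℝ) (x : Phase n) : ℝ :=
  ∑ i, ∑ j,
    (Abar m a i j x * (dq f i x * dq g j x)
      + Bbar m a k U i j x * (dq f i x * dp g j x - dp f j x * dq g i x)
      + Cbar k U i j x * (dp f i x * dp g j x))

variable {E : Type*} [NormedAddCommGroup E] [NormedSpace ℝ E]
lemma contDiff_fderiv_apply {f : E → ℝ} (hf : ContDiff ℝ (⊤ : ℕ∞) f) (v : E) :
    ContDiff ℝ (⊤ : ℕ∞) (fun y => fderiv ℝ f y v) :=
  (hf.fderiv_right (by simp)).clm_apply contDiff_const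
lemma fderiv_fderiv_apply {f : E → ℝ} (hf : ContDiff ℝ (⊤ : ℕ∞) f) (x v w : E) :
    fderiv ℝ (fun y => fderiv ℝ f y v) x w = fderiv ℝ (fderiv ℝ f) x w v := by
  have hd : DifferentiableAt ℝ (fderiv ℝ f) x :=
    ((hf.fderiv_right (m := 1) (by norm_cast)).differentiable one_ne_zero) x
  have h2 : fderiv ℝ (fun y => fderiv ℝ f y v) x
      = (fderiv ℝ f x).comp (fderiv ℝ (fun _ => v) x) + (fderiv ℝ (fderiv ℝ f) x).flip v :=
    fderiv_clm_apply (c := fderiv ℝ f) (u := fun _ => v) hd (differentiableAt_const v)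
  rw [h2]; simp
lemma fderiv2_symm {f : E → ℝ} (hf : ContDiff ℝ (⊤ : ℕ∞) f) (x v w : E) :
    fderiv ℝ (fderiv ℝ f) x v w = fderiv ℝ (fderiv ℝ f) x w v :=
  second_derivative_symmetric (fun y => (hf.differentiable (by simp) y).hasFDerivAt)
    (((hf.fderiv_right (m := 1) (by norm_cast)).differentiable one_ne_zero x).hasFDerivAt) v w

namespace BJ
variable {n : ℕ}
def OpG (c d : Fin n → Phase n → ℝ) (f : Phase n → ℝ) (x : Phase n) : ℝ :=
  ∑ i, (c i x * dq f i x + d i x * dp f i x)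
def cX (m : Fin n → ℝ) (i : Fin n) (y : Phase n) : ℝ := y.2 i / m i
def dX (U : (Fin n → ℝ) → ℝ) (i : Fin n) (y : Phase n) : ℝ := -(dV U i y.1)
def cZ (a : Fin n → ℝ) (i : Fin n) (_ : Phase n) : ℝ := a i
def dZ (k : ℝ) (i : Fin n) (y : Phase n) : ℝ := k / 2 * y.2 i

def sndProj (i : Fin n) : Phase n →L[ℝ] ℝ :=
  (ContinuousLinearMap.proj i).comp (ContinuousLinearMap.snd ℝ (Fin n → ℝ) (Fin n → ℝ))
lemma contDiff_snd_apply (i : Fin n) : ContDiff ℝ (⊤ : ℕ∞) (fun y : Phase n => y.2 i) :=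
  (ContinuousLinearMap.contDiff (sndProj i))
lemma contDiff_cX (m : Fin n → ℝ) (i : Fin n) : ContDiff ℝ (⊤ : ℕ∞) (cX m i) :=
  (contDiff_snd_apply i).div_const (m i)
lemma contDiff_dX {U : (Fin n → ℝ) → ℝ} (hU : ContDiff ℝ (⊤ : ℕ∞) U) (i : Fin n) :
    ContDiff ℝ (⊤ : ℕ∞) (dX U i) :=
  (((contDiff_fderiv_apply hU (Pi.single i 1)).comp contDiff_fst)).neg
lemma contDiff_cZ (a : Fin n → ℝ) (i : Fin n) : ContDiff ℝ (⊤ : ℕ∞) (cZ a i) := contDiff_const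
lemma contDiff_dZ (k : ℝ) (i : Fin n) : ContDiff ℝ (⊤ : ℕ∞) (dZ k i) :=
  contDiff_const.mul (contDiff_snd_apply i)

lemma fderiv_cX (m : Fin n → ℝ) (i : Fin n) (x v : Phase n) :
    fderiv ℝ (cX m i) x v = v.2 i / m i := by
  have h : HasFDerivAt (cX m i) ((m i)⁻¹ • (sndProj i : Phase n →L[ℝ] ℝ)) x := by
    have := ((sndProj (n := n) i).hasFDerivAt (x := x)).mul_const (m i)⁻¹
    unfold cX; simpa [sndProj, div_eq_mul_inv] using this
  rw [h.fderiv]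
  simp [sndProj, div_eq_mul_inv, mul_comm]
lemma fderiv_dX {U : (Fin n → ℝ) → ℝ} (hU : ContDiff ℝ (⊤ : ℕ∞) U) (i : Fin n) (x v : Phase n) :
    fderiv ℝ (dX U i) x v = -(fderiv ℝ (fderiv ℝ U) x.1 v.1 (Pi.single i 1)) := by
  have hg : DifferentiableAt ℝ (fun q => fderiv ℝ U q (Pi.single i 1)) x.1 :=
    (contDiff_fderiv_apply hU _).differentiable (by simp) x.1
  have hcomp : fderiv ℝ (fun y : Phase n => dV U i y.1) x
      = (fderiv ℝ (fun q => fderiv ℝ U q (Pi.single i 1)) x.1).comp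
          (ContinuousLinearMap.fst ℝ (Fin n → ℝ) (Fin n → ℝ)) := by
    have := fderiv_comp (𝕜 := ℝ) x hg (differentiableAt_fst (p := x))
    simpa [dV, Function.comp_def, fderiv_fst] using this
  have h3 : fderiv ℝ (dX U i) x = -(fderiv ℝ (fun y : Phase n => dV U i y.1) x) := by
    unfold dX; exact fderiv_neg
  rw [h3, hcomp]
  simp [fderiv_fderiv_apply hU]
lemma fderiv_cZ (a : Fin n → ℝ) (i : Fin n) (x v : Phase n) :
    fderiv ℝ (cZ a i) x v = 0 := by
  unfold cZ; rw [fderiv_fun_const]; simp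
lemma fderiv_dZ (k : ℝ) (i : Fin n) (x v : Phase n) :
    fderiv ℝ (dZ k i) x v = k / 2 * v.2 i := by
  have h : HasFDerivAt (dZ k i) ((k / 2) • (sndProj i : Phase n →L[ℝ] ℝ)) x := by
    have := ((sndProj (n := n) i).hasFDerivAt (x := x)).const_mul (k / 2)
    unfold dZ; simpa [sndProj] using this
  rw [h.fderiv]; simp [sndProj]

lemma dvec_opG {c d : Fin n → Phase n → ℝ} (hc : ∀ i, ContDiff ℝ (⊤ : ℕ∞) (c i))
    (hd : ∀ i, ContDiff ℝ (⊤ : ℕ∞) (d i)) {f : Phase n → ℝ} (hf : ContDiff ℝ (⊤ : ℕ∞) f)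
    (x v : Phase n) :
    fderiv ℝ (fun y => OpG c d f y) x v
      = ∑ i, (fderiv ℝ (c i) x v * dq f i x
          + c i x * fderiv ℝ (fderiv ℝ f) x v (Pi.single i 1, 0)
          + (fderiv ℝ (d i) x v * dp f i x
          + d i x * fderiv ℝ (fderiv ℝ f) x v (0, Pi.single i 1))) := by
  have hdqd : ∀ i : Fin n, DifferentiableAt ℝ (fun y => dq f i y) x := fun i =>
    (contDiff_fderiv_apply hf _).differentiable (by simp) x
  have hdpd : ∀ i : Fin n, DifferentiableAt ℝ (fun y => dp f i y) x := fun i =>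
    (contDiff_fderiv_apply hf _).differentiable (by simp) x
  have hterm : ∀ i : Fin n, DifferentiableAt ℝ
      (fun y => c i y * dq f i y + d i y * dp f i y) x := fun i =>
    (((hc i).differentiable (by simp) x).mul (hdqd i)).add
      (((hd i).differentiable (by simp) x).mul (hdpd i))
  unfold OpG
  rw [fderiv_fun_sum fun i _ => hterm i]
  rw [ContinuousLinearMap.sum_apply]
  refine Finset.sum_congr rfl fun i _ => ?_
  rw [fderiv_fun_add (((hc i).differentiable (by simp) x).fun_mul (hdqd i))
      (((hd i).differentiable (by simp) x).fun_mul (hdpd i))]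
  rw [ContinuousLinearMap.add_apply,
    fderiv_fun_mul ((hc i).differentiable (by simp) x) (hdqd i),
    fderiv_fun_mul ((hd i).differentiable (by simp) x) (hdpd i)]
  simp only [ContinuousLinearMap.add_apply, ContinuousLinearMap.smul_apply, smul_eq_mul]
  unfold dq dp
  rw [fderiv_fderiv_apply hf, fderiv_fderiv_apply hf]
  ring

lemma sum_antisym {S : Fin n → Fin n → ℝ} (h : ∀ j i, S j i = -S i j) :
    (∑ j, ∑ i, S j i) = 0 := by
  have h1 : (∑ j, ∑ i, S j i) = -∑ j, ∑ i, S j i := by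
    conv_lhs => rw [Finset.sum_comm]
    rw [show (∑ i, ∑ j, S j i) = ∑ i, ∑ j, -(S i j) from
      Finset.sum_congr rfl fun i _ => Finset.sum_congr rfl fun j _ => h j i]
    simp
  linarith

lemma euler_deriv {U : (Fin n → ℝ) → ℝ} (hU : ContDiff ℝ (⊤ : ℕ∞) U) {a : Fin n → ℝ} {k : ℝ}
    (hEuler : ∀ q, ∑ i, a i * dV U i q = k * U q) (q : Fin n → ℝ) (i : Fin n) :
    ∑ j, a j * fderiv ℝ (fderiv ℝ U) q (Pi.single j 1) (Pi.single i 1) = k * dV U i q := by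
  have hfun : (fun q' => ∑ j, a j * dV U j q') = fun q' => k * U q' := funext hEuler
  have h1 : fderiv ℝ (fun q' => ∑ j, a j * dV U j q') q (Pi.single i 1)
      = fderiv ℝ (fun q' => k * U q') q (Pi.single i 1) := by rw [hfun]
  have hdj : ∀ j : Fin n, DifferentiableAt ℝ (fun q' => a j * dV U j q') q := fun j =>
    (differentiableAt_const (a j)).mul ((contDiff_fderiv_apply hU _).differentiable (by simp) q)
  rw [fderiv_fun_sum fun j _ => hdj j] at h1
  rw [ContinuousLinearMap.sum_apply] at h1
  have h2 : ∀ j : Fin n,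
      fderiv ℝ (fun q' => a j * dV U j q') q (Pi.single i 1)
        = a j * fderiv ℝ (fderiv ℝ U) q (Pi.single i 1) (Pi.single j 1) := by
    intro j
    simp only [dV]
    rw [fderiv_const_mul ((contDiff_fderiv_apply hU _).differentiable (by simp) q)]
    simp only [ContinuousLinearMap.smul_apply, smul_eq_mul]
    rw [fderiv_fderiv_apply hU]
  rw [Finset.sum_congr rfl fun j _ => h2 j] at h1
  rw [fderiv_const_mul (hU.differentiable (by simp) q)] at h1
  simp only [ContinuousLinearMap.smul_apply, smul_eq_mul] at h1
  calc ∑ j, a j * fderiv ℝ (fderiv ℝ U) q (Pi.single j 1) (Pi.single i 1)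
      = ∑ j, a j * fderiv ℝ (fderiv ℝ U) q (Pi.single i 1) (Pi.single j 1) :=
        Finset.sum_congr rfl fun j _ => by rw [fderiv2_symm hU]
    _ = k * dV U i q := h1

lemma opG_apply (c d : Fin n → Phase n → ℝ) (F : Phase n → ℝ) (x : Phase n) :
    OpG c d F x = ∑ j, (c j x * fderiv ℝ F x (Pi.single j 1, 0)
      + d j x * fderiv ℝ F x (0, Pi.single j 1)) := rfl

lemma hdelta (g : Fin n → ℝ) (j : Fin n) : ∑ i, (Pi.single j 1 : Fin n → ℝ) i * g i = g j := by
  simp [Pi.single_apply]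

/-- The commutator relation `[Z, X] = (k/2) X`. -/
lemma comm_ZX {m a : Fin n → ℝ} {k : ℝ} {U : (Fin n → ℝ) → ℝ}
    (hU : ContDiff ℝ (⊤ : ℕ∞) U) (hEuler : ∀ q, ∑ i, a i * dV U i q = k * U q)
    {φ : Phase n → ℝ} (hφ : ContDiff ℝ (⊤ : ℕ∞) φ) (x : Phase n) :
    OpG (cZ a) (dZ k) (fun y => OpG (cX m) (dX U) φ y) x
      - OpG (cX m) (dX U) (fun y => OpG (cZ a) (dZ k) φ y) x
      = k / 2 * OpG (cX m) (dX U) φ x := by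
  have hsym : ∀ v w : Phase n,
      fderiv ℝ (fderiv ℝ φ) x v w = fderiv ℝ (fderiv ℝ φ) x w v := fderiv2_symm hφ x
  -- four directional derivatives
  have hDXq : ∀ j : Fin n,
      fderiv ℝ (fun y => OpG (cX m) (dX U) φ y) x (Pi.single j 1, 0)
        = ∑ i, (x.2 i / m i * fderiv ℝ (fderiv ℝ φ) x (Pi.single j 1, 0) (Pi.single i 1, 0)
            - fderiv ℝ (fderiv ℝ U) x.1 (Pi.single j 1) (Pi.single i 1) * dp φ i x
            - dV U i x.1 * fderiv ℝ (fderiv ℝ φ) x (Pi.single j 1, 0) (0, Pi.single i 1)) := by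
    intro j
    rw [dvec_opG (contDiff_cX m) (contDiff_dX hU) hφ]
    refine Finset.sum_congr rfl fun i _ => ?_
    rw [fderiv_cX, fderiv_dX hU]
    simp only [cX, dX]
    simp
    ring
  have hDXp : ∀ j : Fin n,
      fderiv ℝ (fun y => OpG (cX m) (dX U) φ y) x (0, Pi.single j 1)
        = ∑ i, ((Pi.single j 1 : Fin n → ℝ) i * (dq φ i x / m i)
            + x.2 i / m i * fderiv ℝ (fderiv ℝ φ) x (0, Pi.single j 1) (Pi.single i 1, 0)
            - dV U i x.1 * fderiv ℝ (fderiv ℝ φ) x (0, Pi.single j 1) (0, Pi.single i 1)) := by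
    intro j
    rw [dvec_opG (contDiff_cX m) (contDiff_dX hU) hφ]
    refine Finset.sum_congr rfl fun i _ => ?_
    rw [fderiv_cX, fderiv_dX hU]
    simp only [cX, dX]
    simp
    ring
  have hDZq : ∀ j : Fin n,
      fderiv ℝ (fun y => OpG (cZ a) (dZ k) φ y) x (Pi.single j 1, 0)
        = ∑ i, (a i * fderiv ℝ (fderiv ℝ φ) x (Pi.single j 1, 0) (Pi.single i 1, 0)
            + k / 2 * x.2 i * fderiv ℝ (fderiv ℝ φ) x (Pi.single j 1, 0) (0, Pi.single i 1)) := by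
    intro j
    rw [dvec_opG (contDiff_cZ a) (contDiff_dZ k) hφ]
    refine Finset.sum_congr rfl fun i _ => ?_
    rw [fderiv_cZ, fderiv_dZ]
    simp only [cZ, dZ]
    simp
  have hDZp : ∀ j : Fin n,
      fderiv ℝ (fun y => OpG (cZ a) (dZ k) φ y) x (0, Pi.single j 1)
        = ∑ i, (a i * fderiv ℝ (fderiv ℝ φ) x (0, Pi.single j 1) (Pi.single i 1, 0)
            + (Pi.single j 1 : Fin n → ℝ) i * (k / 2 * dp φ i x)
            + k / 2 * x.2 i * fderiv ℝ (fderiv ℝ φ) x (0, Pi.single j 1) (0, Pi.single i 1)) := by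
    intro j
    rw [dvec_opG (contDiff_cZ a) (contDiff_dZ k) hφ]
    refine Finset.sum_congr rfl fun i _ => ?_
    rw [fderiv_cZ, fderiv_dZ]
    simp only [cZ, dZ]
    simp
    ring
  rw [opG_apply (cZ a) (dZ k) (fun y => OpG (cX m) (dX U) φ y) x,
    opG_apply (cX m) (dX U) (fun y => OpG (cZ a) (dZ k) φ y) x]
  simp only [hDXq, hDXp, hDZq, hDZp, cZ, dZ, cX, dX]
  set S : Fin n → Fin n → ℝ := fun j i =>
      a j * (x.2 i / m i) * fderiv ℝ (fderiv ℝ φ) x (Pi.single j 1, 0) (Pi.single i 1, 0)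
    - a j * dV U i x.1 * fderiv ℝ (fderiv ℝ φ) x (Pi.single j 1, 0) (0, Pi.single i 1)
    + k / 2 * x.2 j * (x.2 i / m i) * fderiv ℝ (fderiv ℝ φ) x (0, Pi.single j 1) (Pi.single i 1, 0)
    - k / 2 * x.2 j * dV U i x.1 * fderiv ℝ (fderiv ℝ φ) x (0, Pi.single j 1) (0, Pi.single i 1)
    - x.2 j / m j * a i * fderiv ℝ (fderiv ℝ φ) x (Pi.single j 1, 0) (Pi.single i 1, 0)
    - x.2 j / m j * (k / 2 * x.2 i) * fderiv ℝ (fderiv ℝ φ) x (Pi.single j 1, 0) (0, Pi.single i 1)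
    + dV U j x.1 * a i * fderiv ℝ (fderiv ℝ φ) x (0, Pi.single j 1) (Pi.single i 1, 0)
    + dV U j x.1 * (k / 2 * x.2 i) * fderiv ℝ (fderiv ℝ φ) x (0, Pi.single j 1) (0, Pi.single i 1)
    with hS
  set D : Fin n → Fin n → ℝ := fun j i =>
      (Pi.single j 1 : Fin n → ℝ) i
        * (k / 2 * x.2 j * (dq φ i x / m i) + dV U j x.1 * (k / 2 * dp φ i x)) with hD
  set W : Fin n → Fin n → ℝ := fun j i =>
      -(a j * fderiv ℝ (fderiv ℝ U) x.1 (Pi.single j 1) (Pi.single i 1) * dp φ i x) with hW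
  rw [← Finset.sum_sub_distrib]
  trans (∑ j, ∑ i, (S j i + (D j i + W j i)))
  · refine Finset.sum_congr rfl fun j _ => ?_
    rw [Finset.mul_sum, Finset.mul_sum, Finset.mul_sum, Finset.mul_sum,
      ← Finset.sum_add_distrib, ← Finset.sum_add_distrib, ← Finset.sum_sub_distrib]
    refine Finset.sum_congr rfl fun i _ => ?_
    simp only [hS, hD, hW]
    ring
  · have hsplit : ∑ j, ∑ i, (S j i + (D j i + W j i))
        = (∑ j, ∑ i, S j i) + ((∑ j, ∑ i, D j i) + (∑ j, ∑ i, W j i)) := by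
      simp only [Finset.sum_add_distrib]
    rw [hsplit]
    have hS0 : (∑ j, ∑ i, S j i) = 0 := by
      refine sum_antisym fun j i => ?_
      simp only [hS]
      linear_combination
        (a j * (x.2 i / m i) - x.2 j / m j * a i)
          * hsym (Pi.single j 1, 0) (Pi.single i 1, 0)
        + (-(a j * dV U i x.1) - x.2 j / m j * (k / 2 * x.2 i))
          * hsym (Pi.single j 1, 0) (0, Pi.single i 1)
        + (k / 2 * x.2 j * (x.2 i / m i) + dV U j x.1 * a i)
          * hsym (0, Pi.single j 1) (Pi.single i 1, 0)
        + (-(k / 2 * x.2 j * dV U i x.1) + dV U j x.1 * (k / 2 * x.2 i))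
          * hsym (0, Pi.single j 1) (0, Pi.single i 1)
    have hD0 : ∀ j, (∑ i, D j i)
        = k / 2 * x.2 j * (dq φ j x / m j) + dV U j x.1 * (k / 2 * dp φ j x) := by
      intro j
      simp only [hD]
      exact hdelta (fun i => k / 2 * x.2 j * (dq φ i x / m i)
        + dV U j x.1 * (k / 2 * dp φ i x)) j
    have hW0 : (∑ j, ∑ i, W j i) = ∑ i, -(k * dV U i x.1 * dp φ i x) := by
      rw [Finset.sum_comm]
      refine Finset.sum_congr rfl fun i _ => ?_
      simp only [hW]
      have he := euler_deriv hU hEuler x.1 i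
      calc ∑ j, -(a j * fderiv ℝ (fderiv ℝ U) x.1 (Pi.single j 1) (Pi.single i 1) * dp φ i x)
          = -((∑ j, a j * fderiv ℝ (fderiv ℝ U) x.1 (Pi.single j 1) (Pi.single i 1))
              * dp φ i x) := by
            rw [Finset.sum_mul, ← Finset.sum_neg_distrib]
        _ = -(k * dV U i x.1 * dp φ i x) := by rw [he]
    rw [hS0, zero_add, Finset.sum_congr rfl fun j _ => hD0 j, hW0,
      ← Finset.sum_add_distrib, opG_apply (cX m) (dX U) φ x, Finset.mul_sum]
    refine Finset.sum_congr rfl fun i _ => ?_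
    simp only [cX, dX, dq, dp]
    ring

/-- Step A: the bracket is decomposable. -/
lemma bracketB_eq (m a : Fin n → ℝ) (k : ℝ) (U : (Fin n → ℝ) → ℝ)
    (f g : Phase n → ℝ) (x : Phase n) :
    bracketB m a k U f g x
      = OpG (cX m) (dX U) f x * OpG (cZ a) (dZ k) g x
        - OpG (cZ a) (dZ k) f x * OpG (cX m) (dX U) g x := by
  have hsplit : bracketB m a k U f g x =
      (∑ i, ∑ j, (Abar m a i j x * (dq f i x * dq g j x)
        + Bbar m a k U i j x * (dq f i x * dp g j x)
        + Cbar k U i j x * (dp f i x * dp g j x)))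
      - ∑ i, ∑ j, Bbar m a k U i j x * (dp f j x * dq g i x) := by
    rw [← Finset.sum_sub_distrib]
    refine Finset.sum_congr rfl fun i _ => ?_
    rw [← Finset.sum_sub_distrib]
    exact Finset.sum_congr rfl fun j _ => by ring
  have hswap : (∑ i, ∑ j, Bbar m a k U i j x * (dp f j x * dq g i x))
      = ∑ i, ∑ j, Bbar m a k U j i x * (dp f i x * dq g j x) := Finset.sum_comm
  rw [hsplit, hswap, ← Finset.sum_sub_distrib]
  unfold OpG
  rw [Finset.sum_mul_sum, Finset.sum_mul_sum, ← Finset.sum_sub_distrib]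
  refine Finset.sum_congr rfl fun i _ => ?_
  rw [← Finset.sum_sub_distrib, ← Finset.sum_sub_distrib]
  refine Finset.sum_congr rfl fun j _ => ?_
  unfold Abar Bbar Cbar cX dX cZ dZ
  ring


lemma contDiff_opG {c d : Fin n → Phase n → ℝ} (hc : ∀ i, ContDiff ℝ (⊤ : ℕ∞) (c i))
    (hd : ∀ i, ContDiff ℝ (⊤ : ℕ∞) (d i)) {f : Phase n → ℝ} (hf : ContDiff ℝ (⊤ : ℕ∞) f) :
    ContDiff ℝ (⊤ : ℕ∞) (fun y => OpG c d f y) := by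
  unfold OpG dq dp
  exact ContDiff.sum fun i _ =>
    ((hc i).mul (contDiff_fderiv_apply hf _)).add ((hd i).mul (contDiff_fderiv_apply hf _))

lemma opG_mul {c d : Fin n → Phase n → ℝ} {u v : Phase n → ℝ} {x : Phase n}
    (hu : DifferentiableAt ℝ u x) (hv : DifferentiableAt ℝ v x) :
    OpG c d (fun y => u y * v y) x = OpG c d u x * v x + u x * OpG c d v x := by
  unfold OpG dq dp
  rw [Finset.sum_mul, Finset.mul_sum, ← Finset.sum_add_distrib]
  refine Finset.sum_congr rfl fun i _ => ?_
  rw [fderiv_fun_mul hu hv]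
  simp only [ContinuousLinearMap.add_apply, ContinuousLinearMap.smul_apply, smul_eq_mul]
  ring

lemma opG_sub {c d : Fin n → Phase n → ℝ} {u v : Phase n → ℝ} {x : Phase n}
    (hu : DifferentiableAt ℝ u x) (hv : DifferentiableAt ℝ v x) :
    OpG c d (fun y => u y - v y) x = OpG c d u x - OpG c d v x := by
  unfold OpG dq dp
  rw [← Finset.sum_sub_distrib]
  refine Finset.sum_congr rfl fun i _ => ?_
  rw [fderiv_fun_sub hu hv]
  simp only [ContinuousLinearMap.sub_apply]
  ring


end BJ



/-- the bracket `{·,·}⁻` satisfies the Jacobi identity, hence it is a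
Poisson bracket. -/

theorem bracketB_jacobi (n : ℕ) (m : Fin n → ℝ) (hm : ∀ i, 0 < m i)
    (a : Fin n → ℝ) (k : ℝ)
    (U : (Fin n → ℝ) → ℝ) (hU : ContDiff ℝ (⊤ : ℕ∞) U)
    (hEuler : ∀ q : Fin n → ℝ, ∑ i, a i * dV U i q = k * U q)
    (f g h : Phase n → ℝ) (hf : ContDiff ℝ (⊤ : ℕ∞) f) (hg : ContDiff ℝ (⊤ : ℕ∞) g)
    (hh : ContDiff ℝ (⊤ : ℕ∞) h) :
    ∀ x : Phase n,
      bracketB m a k U (fun y => bracketB m a k U f g y) h x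
        + bracketB m a k U (fun y => bracketB m a k U g h y) f x
        + bracketB m a k U (fun y => bracketB m a k U h f y) g x = 0 := by
  intro x
  have hcX := BJ.contDiff_cX (n := n) m
  have hdXc := fun i => BJ.contDiff_dX (n := n) hU i
  have hcZ := BJ.contDiff_cZ (n := n) a
  have hdZc := fun i => BJ.contDiff_dZ (n := n) k i
  have main : ∀ u v w : Phase n → ℝ, ContDiff ℝ (⊤ : ℕ∞) u → ContDiff ℝ (⊤ : ℕ∞) v →
      bracketB m a k U (fun y => bracketB m a k U u v y) w x
        = (BJ.OpG (BJ.cX m) (BJ.dX U) (fun y => BJ.OpG (BJ.cX m) (BJ.dX U) u y) x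
              * BJ.OpG (BJ.cZ a) (BJ.dZ k) v x
            + BJ.OpG (BJ.cX m) (BJ.dX U) u x
              * BJ.OpG (BJ.cX m) (BJ.dX U) (fun y => BJ.OpG (BJ.cZ a) (BJ.dZ k) v y) x
            - (BJ.OpG (BJ.cX m) (BJ.dX U) (fun y => BJ.OpG (BJ.cZ a) (BJ.dZ k) u y) x
                * BJ.OpG (BJ.cX m) (BJ.dX U) v x
              + BJ.OpG (BJ.cZ a) (BJ.dZ k) u x
                * BJ.OpG (BJ.cX m) (BJ.dX U) (fun y => BJ.OpG (BJ.cX m) (BJ.dX U) v y) x))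
          * BJ.OpG (BJ.cZ a) (BJ.dZ k) w x
        - (BJ.OpG (BJ.cZ a) (BJ.dZ k) (fun y => BJ.OpG (BJ.cX m) (BJ.dX U) u y) x
              * BJ.OpG (BJ.cZ a) (BJ.dZ k) v x
            + BJ.OpG (BJ.cX m) (BJ.dX U) u x
              * BJ.OpG (BJ.cZ a) (BJ.dZ k) (fun y => BJ.OpG (BJ.cZ a) (BJ.dZ k) v y) x
            - (BJ.OpG (BJ.cZ a) (BJ.dZ k) (fun y => BJ.OpG (BJ.cZ a) (BJ.dZ k) u y) x
                * BJ.OpG (BJ.cX m) (BJ.dX U) v x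
              + BJ.OpG (BJ.cZ a) (BJ.dZ k) u x
                * BJ.OpG (BJ.cZ a) (BJ.dZ k) (fun y => BJ.OpG (BJ.cX m) (BJ.dX U) v y) x))
          * BJ.OpG (BJ.cX m) (BJ.dX U) w x := by
    intro u v w hu hv
    have hXu := BJ.contDiff_opG hcX hdXc hu
    have hXv := BJ.contDiff_opG hcX hdXc hv
    have hZu := BJ.contDiff_opG hcZ hdZc hu
    have hZv := BJ.contDiff_opG hcZ hdZc hv
    have dXu : DifferentiableAt ℝ (fun y => BJ.OpG (BJ.cX m) (BJ.dX U) u y) x :=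
      hXu.differentiable (by simp) x
    have dXv : DifferentiableAt ℝ (fun y => BJ.OpG (BJ.cX m) (BJ.dX U) v y) x :=
      hXv.differentiable (by simp) x
    have dZu : DifferentiableAt ℝ (fun y => BJ.OpG (BJ.cZ a) (BJ.dZ k) u y) x :=
      hZu.differentiable (by simp) x
    have dZv : DifferentiableAt ℝ (fun y => BJ.OpG (BJ.cZ a) (BJ.dZ k) v y) x :=
      hZv.differentiable (by simp) x
    have hfg : (fun y => bracketB m a k U u v y)
        = fun y => BJ.OpG (BJ.cX m) (BJ.dX U) u y * BJ.OpG (BJ.cZ a) (BJ.dZ k) v y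
            - BJ.OpG (BJ.cZ a) (BJ.dZ k) u y * BJ.OpG (BJ.cX m) (BJ.dX U) v y :=
      funext fun y => BJ.bracketB_eq m a k U u v y
    rw [hfg, BJ.bracketB_eq]
    rw [BJ.opG_sub (c := BJ.cX m) (d := BJ.dX U) (dXu.fun_mul dZv) (dZu.fun_mul dXv),
      BJ.opG_sub (c := BJ.cZ a) (d := BJ.dZ k) (dXu.fun_mul dZv) (dZu.fun_mul dXv),
      BJ.opG_mul (c := BJ.cX m) (d := BJ.dX U) dXu dZv,
      BJ.opG_mul (c := BJ.cX m) (d := BJ.dX U) dZu dXv,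
      BJ.opG_mul (c := BJ.cZ a) (d := BJ.dZ k) dXu dZv,
      BJ.opG_mul (c := BJ.cZ a) (d := BJ.dZ k) dZu dXv]
  rw [main f g h hf hg, main g h f hg hh, main h f g hh hf]
  have cf := BJ.comm_ZX (m := m) hU hEuler hf x
  have cg := BJ.comm_ZX (m := m) hU hEuler hg x
  have ch := BJ.comm_ZX (m := m) hU hEuler hh x
  linear_combination
    (BJ.OpG (BJ.cZ a) (BJ.dZ k) h x * BJ.OpG (BJ.cX m) (BJ.dX U) g x
      - BJ.OpG (BJ.cZ a) (BJ.dZ k) g x * BJ.OpG (BJ.cX m) (BJ.dX U) h x) * cf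
    + (BJ.OpG (BJ.cZ a) (BJ.dZ k) f x * BJ.OpG (BJ.cX m) (BJ.dX U) h x
      - BJ.OpG (BJ.cZ a) (BJ.dZ k) h x * BJ.OpG (BJ.cX m) (BJ.dX U) f x) * cg
    + (BJ.OpG (BJ.cZ a) (BJ.dZ k) g x * BJ.OpG (BJ.cX m) (BJ.dX U) f x
      - BJ.OpG (BJ.cZ a) (BJ.dZ k) f x * BJ.OpG (BJ.cX m) (BJ.dX U) g x) * ch
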